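/- arXiv:2011.02826 — 6 statements merged into one kernel-verified Lean document; each statement's English description precedes it below -/
import Mathlib

section
/- Let n ≥ 1, let β₁, …, βₙ be positive integers, and let Δ be a positive integer with βᵢ ≤ Δ for every i. Then there exist integers x¹₁, x¹₂, x¹₃, …, xⁿ₁, xⁿ₂, xⁿ₃ satisfying 0 ≤ xⁱ₁ ≤ βᵢ, 0 ≤ xⁱ₂ ≤ Δ − βᵢ, 0 ≤ xⁱ₃ ≤ 1 and xⁱ₁ + xⁱ₂ + Δ·xⁱ₃ = Δ for every i ∈ {1, …, n}, together with ∑_{i=1}^n xⁱ₁ = Δ, if and only if there exists a subset S ⊆ {1, …, n} with ∑_{i∈S} βᵢ = Δ. -/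
/-!
A block `x₁ + x₂ + Δ x₃ = Δ` with `x₃ ∈ {0, 1}` has exactly two kinds of solutions: `x₃ = 1`
forces `x₁ = x₂ = 0`, while `x₃ = 0` forces `x₁ + x₂ = Δ`, which the upper bounds
`x₁ ≤ β`, `x₂ ≤ Δ - β` only allow for `x₁ = β`. Hence `∑ x₁ = Δ` says precisely that the `βᵢ`
of the blocks with `x₃ = 0` add up to `Δ`; conversely, a subset `S` summing to `Δ` is realised by
`(x₁, x₂, x₃) = (βᵢ, Δ - βᵢ, 0)` on `S` and `(0, 0, 1)` off `S`.
-/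

open Finset

theorem nfold_block_fst_eq {β Δ x₁ x₂ x₃ : ℤ} (h₁ : 0 ≤ x₁ ∧ x₁ ≤ β)
    (h₂ : 0 ≤ x₂ ∧ x₂ ≤ Δ - β) (h₃ : 0 ≤ x₃ ∧ x₃ ≤ 1) (h : x₁ + x₂ + Δ * x₃ = Δ) :
    x₁ = if x₃ = 0 then β else 0 := by
  obtain hx₃ | hx₃ : x₃ = 0 ∨ x₃ = 1 := by omega
  · subst hx₃
    rw [if_pos rfl]
    linarith
  · subst hx₃
    rw [if_neg one_ne_zero]
    linarith

theorem exists_sum_eq_of_nfold_solution {ι : Type*} [Fintype ι] {β x₁ x₂ x₃ : ι → ℤ} {Δ : ℤ}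
    (h₁ : ∀ i, 0 ≤ x₁ i ∧ x₁ i ≤ β i) (h₂ : ∀ i, 0 ≤ x₂ i ∧ x₂ i ≤ Δ - β i)
    (h₃ : ∀ i, 0 ≤ x₃ i ∧ x₃ i ≤ 1) (h : ∀ i, x₁ i + x₂ i + Δ * x₃ i = Δ)
    (hsum : ∑ i, x₁ i = Δ) :
    ∃ S : Finset ι, ∑ i ∈ S, β i = Δ := by
  refine ⟨univ.filter (fun i => x₃ i = 0), ?_⟩
  rw [sum_filter, ← hsum]
  exact sum_congr rfl fun i _ => (nfold_block_fst_eq (h₁ i) (h₂ i) (h₃ i) (h i)).symm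

theorem exists_nfold_solution_of_sum_eq {ι : Type*} [Fintype ι] {β : ι → ℤ} {Δ : ℤ}
    (hβ₀ : ∀ i, 0 ≤ β i) (hβΔ : ∀ i, β i ≤ Δ) {S : Finset ι} (hS : ∑ i ∈ S, β i = Δ) :
    ∃ x₁ x₂ x₃ : ι → ℤ,
      (∀ i, 0 ≤ x₁ i ∧ x₁ i ≤ β i) ∧
      (∀ i, 0 ≤ x₂ i ∧ x₂ i ≤ Δ - β i) ∧
      (∀ i, 0 ≤ x₃ i ∧ x₃ i ≤ 1) ∧
      (∀ i, x₁ i + x₂ i + Δ * x₃ i = Δ) ∧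
      (∑ i, x₁ i = Δ) := by
  classical
  refine ⟨fun i => if i ∈ S then β i else 0, fun i => if i ∈ S then Δ - β i else 0,
    fun i => if i ∈ S then 0 else 1, fun i => ?_, fun i => ?_, fun i => ?_, fun i => ?_,
    by rw [sum_ite_mem, univ_inter, hS]⟩
  all_goals by_cases hi : i ∈ S <;> simp only [hi, if_true, if_false] <;> grind [hβ₀ i, hβΔ i]

theorem subset_sum_reduction_nfold_general
    (n : ℕ) (β : Fin n → ℤ) (hβpos : ∀ i, 0 < β i)
    (Δ : ℤ) (hβΔ : ∀ i, β i ≤ Δ) :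
    (∃ x1 x2 x3 : Fin n → ℤ,
      (∀ i, 0 ≤ x1 i ∧ x1 i ≤ β i) ∧
      (∀ i, 0 ≤ x2 i ∧ x2 i ≤ Δ - β i) ∧
      (∀ i, 0 ≤ x3 i ∧ x3 i ≤ 1) ∧
      (∀ i, x1 i + x2 i + Δ * x3 i = Δ) ∧
      (∑ i, x1 i = Δ)) ↔
    ∃ S : Finset (Fin n), ∑ i ∈ S, β i = Δ := by
  constructor
  · rintro ⟨x1, x2, x3, h1, h2, h3, h, hsum⟩
    exact exists_sum_eq_of_nfold_solution h1 h2 h3 h hsum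
  · rintro ⟨S, hS⟩
    exact exists_nfold_solution_of_sum_eq (fun i => (hβpos i).le) hβΔ hS

/-- Correctness of the reduction from subset-sum to n-fold IP with
`A = (1,1,Δ)` and `D = (1,0,0)`. -/
theorem subset_sum_reduction_nfold
    (n : ℕ) (hn : 1 ≤ n) (β : Fin n → ℤ) (hβpos : ∀ i, 0 < β i)
    (Δ : ℤ) (hΔ : 0 < Δ) (hβΔ : ∀ i, β i ≤ Δ) :
    (∃ x1 x2 x3 : Fin n → ℤ,
      (∀ i, 0 ≤ x1 i ∧ x1 i ≤ β i) ∧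
      (∀ i, 0 ≤ x2 i ∧ x2 i ≤ Δ - β i) ∧
      (∀ i, 0 ≤ x3 i ∧ x3 i ≤ 1) ∧
      (∀ i, x1 i + x2 i + Δ * x3 i = Δ) ∧
      (∑ i, x1 i = Δ)) ↔
    ∃ S : Finset (Fin n), ∑ i ∈ S, β i = Δ :=
  subset_sum_reduction_nfold_general n β hβpos Δ hβΔ
end

section
/- Let n ≥ 1, let β₁, …, βₙ be positive integers, and let Δ be a positive integer. Then there exist integers x¹₁, x¹₂, …, xⁿ₁, xⁿ₂ satisfying 0 ≤ xⁱ₁ ≤ 1, 0 ≤ xⁱ₂ ≤ Δ and Δ·xⁱ₁ + xⁱ₂ = Δ for every i ∈ {1, …, n}, together with ∑_{i=1}^n βᵢ·xⁱ₁ = Δ, if and only if there exists a subset S ⊆ {1, …, n} with ∑_{i∈S} βᵢ = Δ. -/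
/-!
The slack `x²ᵢ = Δ - Δ·x¹ᵢ` of each diagonal block is forced and always admissible, so the
program is feasible exactly when some `0/1` vector `x¹` has `∑ βᵢ x¹ᵢ = Δ`, and such vectors
are the indicator vectors of the subsets of `{1, …, n}`.
-/

open Finset

theorem exists_subset_sum_eq_iff_exists_zero_one_vector {ι : Type*} [Fintype ι]
    (β : ι → ℤ) (t : ℤ) :
    (∃ x : ι → ℤ, (∀ i, 0 ≤ x i ∧ x i ≤ 1) ∧ ∑ i, β i * x i = t) ↔
      ∃ S : Finset ι, ∑ i ∈ S, β i = t := by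
  classical
  constructor
  · rintro ⟨x, hx, rfl⟩
    refine ⟨univ.filter (x · = 1), ?_⟩
    rw [sum_filter]
    refine sum_congr rfl fun i _ => ?_
    obtain ⟨h0, h1⟩ := hx i
    interval_cases x i <;> simp
  · rintro ⟨S, rfl⟩
    refine ⟨fun i => if i ∈ S then 1 else 0, fun i => ?_, ?_⟩
    · dsimp only; split_ifs <;> norm_num
    · simp only [mul_ite, mul_one, mul_zero, sum_ite_mem, univ_inter]

theorem subset_sum_reduction_generalized_nfold_A_general
    (n : ℕ) (β : Fin n → ℤ)
    (Δ : ℤ) (hΔ : 0 < Δ) :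
    (∃ x1 x2 : Fin n → ℤ,
      (∀ i, 0 ≤ x1 i ∧ x1 i ≤ 1) ∧
      (∀ i, 0 ≤ x2 i ∧ x2 i ≤ Δ) ∧
      (∀ i, Δ * x1 i + x2 i = Δ) ∧
      (∑ i, β i * x1 i = Δ)) ↔
    ∃ S : Finset (Fin n), ∑ i ∈ S, β i = Δ := by
  rw [← exists_subset_sum_eq_iff_exists_zero_one_vector]
  constructor
  · rintro ⟨x1, -, hx1, -, -, hsum⟩
    exact ⟨x1, hx1, hsum⟩
  · rintro ⟨x1, hx1, hsum⟩
    have slack_bounds (i : Fin n) : 0 ≤ Δ - Δ * x1 i ∧ Δ - Δ * x1 i ≤ Δ := by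
      obtain ⟨h0, h1⟩ := hx1 i
      constructor <;> nlinarith
    exact ⟨x1, fun i => Δ - Δ * x1 i, hx1, slack_bounds, fun i => by ring, hsum⟩

/-- Correctness of the reduction from subset-sum to generalized n-fold IP
with diagonal blocks `A = (Δ, 1)` and top blocks `Dᵢ = (βᵢ, 0)`. -/
theorem subset_sum_reduction_generalized_nfold_A
    (n : ℕ) (hn : 1 ≤ n) (β : Fin n → ℤ) (hβpos : ∀ i, 0 < β i)
    (Δ : ℤ) (hΔ : 0 < Δ) :
    (∃ x1 x2 : Fin n → ℤ,
      (∀ i, 0 ≤ x1 i ∧ x1 i ≤ 1) ∧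
      (∀ i, 0 ≤ x2 i ∧ x2 i ≤ Δ) ∧
      (∀ i, Δ * x1 i + x2 i = Δ) ∧
      (∑ i, β i * x1 i = Δ)) ↔
    ∃ S : Finset (Fin n), ∑ i ∈ S, β i = Δ :=
  subset_sum_reduction_generalized_nfold_A_general n β Δ hΔ
end

section
/- Let n ≥ 1, let β₁, …, βₙ be positive integers, and let Δ be a positive integer. Then there exist integers x¹₁, x¹₂, …, xⁿ₁, xⁿ₂ satisfying 0 ≤ xⁱ₁ ≤ βᵢ, 0 ≤ xⁱ₂ ≤ 1 and xⁱ₁ + βᵢ·xⁱ₂ = βᵢ for every i ∈ {1, …, n}, together with ∑_{i=1}^n xⁱ₁ = Δ, if and only if there exists a subset S ⊆ {1, …, n} with ∑_{i∈S} βᵢ = Δ. -/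
/-! A feasible point is determined by its `x2 ∈ {0, 1}^n`: the equation `xⁱ₁ + βᵢ xⁱ₂ = βᵢ` forces
`xⁱ₁ = βᵢ` when `xⁱ₂ = 0` and `xⁱ₁ = 0` when `xⁱ₂ = 1`. So feasible points correspond to subsets
`S = {i | xⁱ₂ = 0}`, and `∑ xⁱ₁` is then `∑_{i ∈ S} βᵢ`. -/

lemma Int.eq_ite_of_add_mul_eq_self {x y b : ℤ} (hy₀ : 0 ≤ y) (hy₁ : y ≤ 1) (h : x + b * y = b) :
    x = if y = 0 then b else 0 := by
  obtain rfl | rfl : y = 0 ∨ y = 1 := by omega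
  · simpa using h
  · simpa using h

theorem subset_sum_reduction_generalized_nfold_D_general
    (n : ℕ) (β : Fin n → ℤ) (hβpos : ∀ i, 0 < β i)
    (Δ : ℤ) :
    (∃ x1 x2 : Fin n → ℤ,
      (∀ i, 0 ≤ x1 i ∧ x1 i ≤ β i) ∧
      (∀ i, 0 ≤ x2 i ∧ x2 i ≤ 1) ∧
      (∀ i, x1 i + β i * x2 i = β i) ∧
      (∑ i, x1 i = Δ)) ↔
    ∃ S : Finset (Fin n), ∑ i ∈ S, β i = Δ := by
  constructor
  · rintro ⟨x1, x2, -, hx2, heq, rfl⟩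
    refine ⟨({i | x2 i = 0} : Finset (Fin n)), ?_⟩
    rw [Finset.sum_filter]
    exact Finset.sum_congr rfl fun i _ =>
      (Int.eq_ite_of_add_mul_eq_self (hx2 i).1 (hx2 i).2 (heq i)).symm
  · rintro ⟨S, rfl⟩
    refine ⟨fun i => if i ∈ S then β i else 0, fun i => if i ∈ S then 0 else 1,
      fun i => ?_, fun i => ?_, fun i => ?_, by simp [Finset.sum_ite_mem]⟩ <;>
    by_cases hi : i ∈ S <;> simp [hi, (hβpos i).le]

/-- Correctness of the reduction from subset-sum to generalized n-fold IP
with top blocks `D = (1, 0)` and diagonal blocks `Aᵢ = (1, βᵢ)`. -/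
theorem subset_sum_reduction_generalized_nfold_D
    (n : ℕ) (hn : 1 ≤ n) (β : Fin n → ℤ) (hβpos : ∀ i, 0 < β i)
    (Δ : ℤ) (hΔ : 0 < Δ) :
    (∃ x1 x2 : Fin n → ℤ,
      (∀ i, 0 ≤ x1 i ∧ x1 i ≤ β i) ∧
      (∀ i, 0 ≤ x2 i ∧ x2 i ≤ 1) ∧
      (∀ i, x1 i + β i * x2 i = β i) ∧
      (∑ i, x1 i = Δ)) ↔
    ∃ S : Finset (Fin n), ∑ i ∈ S, β i = Δ :=
  subset_sum_reduction_generalized_nfold_D_general n β hβpos Δ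
end

section
/- Let s_C, t_B, t_A ≥ 1 and n ≥ 1, let C ∈ ℤ^{s_C×t_B}, D ∈ ℤ^{s_C×t_A}, B ∈ ℤ^{1×t_B}, let b⁰ ∈ ℤ^{s_C}, b¹, …, bⁿ ∈ ℤ, let l⁰, u⁰ ∈ ℤ^{t_B}, lⁱ, uⁱ ∈ ℤ^{t_A} for 1 ≤ i ≤ n, and let w⁰ ∈ ℝ^{t_B}, wⁱ ∈ ℝ^{t_A} for 1 ≤ i ≤ n. Suppose x⁰ ∈ ℤ^{t_B}, y ∈ ℤ^{t_A} and x¹, …, xⁿ ∈ ℝ^{t_A} satisfy: ∑_{i=1}^n xⁱ = y; C·x⁰ + D·y = b⁰; B·x⁰ + ∑_{j=1}^{t_A} xⁱⱼ = bⁱ for every i; l⁰ ≤ x⁰ ≤ u⁰; and lⁱ ≤ xⁱ ≤ uⁱ for every i. Then there exist x̄¹, …, x̄ⁿ ∈ ℤ^{t_A} such that (x⁰, x̄¹, …, x̄ⁿ) satisfies all the above constraints (with ∑_{i=1}^n x̄ⁱ = y) and w⁰·x⁰ + ∑_{i=1}^n wⁱ·x̄ⁱ ≥ w⁰·x⁰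 + ∑_{i=1}^n wⁱ·xⁱ. Consequently, the supremum of the objective over integer feasible solutions of the 4-block n-fold integer program with A = (1, …, 1) equals the supremum over such mixed feasible solutions. -/
/-!
For fixed `x⁰` and `y` the bricks form a real `n × t_A` matrix whose row sums `bⁱ - B x⁰` and
column sums `y` are integers and whose entries lie in an integral box, and such a matrix can be
rounded without losing objective. Let `F` be its set of fractional entries. A row or column meeting
`F` meets it at least twice, since its sum is an integer; hence `#rows + #columns ≤ #F`, and a
dimension count gives a nonzero real matrix supported on `F` with zero row and column sums.
Moving along it, in the direction that does not decrease the objective, until the first entry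
becomes integral keeps every constraint and shrinks `F`. The suprema agree because every feasible
value of either problem is dominated by a feasible value of the other.
-/

open Finset

lemma exists_ne_notMem_range_intCast_of_sum_eq_intCast {α : Type*} {s : Finset α} {f : α → ℝ}
    {m : ℤ} (hs : ∑ a ∈ s, f a = m) {a : α} (ha : a ∈ s) (hfa : f a ∉ Set.range Int.cast) :
    ∃ b ∈ s, b ≠ a ∧ f b ∉ Set.range Int.cast := by
  classical
  by_contra! hint
  have hrest : ∑ b ∈ s.erase a, f b = ((∑ b ∈ s.erase a, ⌊f b⌋ : ℤ) : ℝ) := by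
    push_cast
    refine sum_congr rfl fun b hb => ?_
    exact ((Int.floor_eq_self_iff_mem _).mpr
      (hint b (mem_of_mem_erase hb) (ne_of_mem_erase hb))).symm
  refine hfa ⟨m - ∑ b ∈ s.erase a, ⌊f b⌋, ?_⟩
  rw [← add_sum_erase s f ha, hrest] at hs
  push_cast at hs ⊢
  linarith

lemma floor_le_add_mul_and_add_mul_le_ceil {a c s : ℝ} (hs₀ : 0 ≤ s)
    (hs : s ≤ (((if 0 < c then ⌈a⌉ else ⌊a⌋ : ℤ) : ℝ) - a) / c) :
    (⌊a⌋ : ℝ) ≤ a + s * c ∧ a + s * c ≤ ⌈a⌉ := by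
  have hfloor := Int.floor_le a
  have hceil := Int.le_ceil a
  rcases lt_trichotomy c 0 with hc | rfl | hc
  · rw [if_neg hc.not_gt, le_div_iff_of_neg hc] at hs
    constructor <;> nlinarith
  · simpa using ⟨hfloor, hceil⟩
  · rw [if_pos hc, le_div_iff₀ hc] at hs
    constructor <;> nlinarith

lemma div_pos_of_notMem_range_intCast {a c : ℝ} (ha : a ∉ Set.range Int.cast) (hc : c ≠ 0) :
    0 < (((if 0 < c then ⌈a⌉ else ⌊a⌋ : ℤ) : ℝ) - a) / c := by
  have hfloor : (⌊a⌋ : ℝ) < a := Int.floor_lt_self_iff.mpr ha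
  have hceil : a < ⌈a⌉ := (Int.le_ceil a).lt_of_ne fun h => ha ⟨_, h.symm⟩
  rcases hc.lt_or_gt with hc | hc
  · rw [if_neg hc.not_gt]; exact div_pos_of_neg_of_neg (by linarith) hc
  · rw [if_pos hc]; exact div_pos (by linarith) hc

section

variable {σ : Type*} [Fintype σ]

lemma exists_pos_step_to_intCast (x e : σ → ℝ) (he : e ≠ 0)
    (hfrac : ∀ p, e p ≠ 0 → x p ∉ Set.range Int.cast) :
    ∃ ε > 0, (∀ p, (⌊x p⌋ : ℝ) ≤ x p + ε * e p ∧ x p + ε * e p ≤ ⌈x p⌉) ∧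
      ∃ q, e q ≠ 0 ∧ x q + ε * e q ∈ Set.range Int.cast := by
  classical
  -- the integer that coordinate `p` meets first when moving along `e`
  let target p : ℤ := if 0 < e p then ⌈x p⌉ else ⌊x p⌋
  let t p : ℝ := (target p - x p) / e p
  have hP : (univ.filter fun p => e p ≠ 0).Nonempty := by
    obtain ⟨p, hp⟩ := Function.ne_iff.mp he
    exact ⟨p, by simpa using hp⟩
  obtain ⟨q, hqP, hq⟩ := exists_mem_eq_inf' hP t
  have hq0 : e q ≠ 0 := (mem_filter.mp hqP).2
  refine ⟨t q, div_pos_of_notMem_range_intCast (hfrac q hq0) hq0, fun p => ?_, q, hq0,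
    target q, by simp [t, div_mul_cancel₀ _ hq0]⟩
  by_cases hp : e p = 0
  · simpa [hp] using ⟨Int.floor_le (x p), Int.le_ceil (x p)⟩
  · exact floor_le_add_mul_and_add_mul_le_ceil
      (div_pos_of_notMem_range_intCast (hfrac q hq0) hq0).le (hq ▸ inf'_le t (by simpa using hp))

open Classical in
noncomputable def fractSupport (x : σ → ℝ) : Finset σ :=
  {p | x p ∉ Set.range Int.cast}

lemma mem_fractSupport {x : σ → ℝ} {p : σ} :
    p ∈ fractSupport x ↔ x p ∉ Set.range Int.cast := by
  simp [fractSupport]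

lemma notMem_fractSupport {x : σ → ℝ} {p : σ} :
    p ∉ fractSupport x ↔ x p ∈ Set.range Int.cast := by
  simp [fractSupport]

end

lemma Finset.two_mul_card_image_le {α β : Type*} [DecidableEq β] {s : Finset α} {g : α → β}
    (h : ∀ a ∈ s, ∃ b ∈ s, b ≠ a ∧ g b = g a) : 2 * #(s.image g) ≤ #s := by
  rw [card_eq_sum_card_image g s, mul_comm, ← smul_eq_mul]
  refine card_nsmul_le_sum _ _ _ fun c hc => ?_
  obtain ⟨a, ha, rfl⟩ := mem_image.mp hc
  obtain ⟨b, hb, hba, hgb⟩ := h a ha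
  exact one_lt_card.mpr ⟨a, by simp [ha], b, by simp [hb, hgb], hba.symm⟩

section Matrix

variable {ι κ : Type*} [Fintype ι] [Fintype κ]

def IsCirculationOn (F : Finset (ι × κ)) (d : ι → κ → ℝ) : Prop :=
  (∀ i j, (i, j) ∉ F → d i j = 0) ∧ (∀ i, ∑ j, d i j = 0) ∧ ∀ j, ∑ i, d i j = 0

lemma IsCirculationOn.neg {F : Finset (ι × κ)} {d : ι → κ → ℝ} (hd : IsCirculationOn F d) :
    IsCirculationOn F (-d) := by
  obtain ⟨hsupp, hrow, hcol⟩ := hd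
  refine ⟨fun i j hij => by simp [hsupp i j hij], fun i => ?_, fun j => ?_⟩ <;>
    simp [sum_neg_distrib, hrow, hcol]

lemma exists_ne_zero_isCirculationOn [DecidableEq ι] [DecidableEq κ] {F : Finset (ι × κ)}
    (hF : F.Nonempty) (hcard : #(F.image Prod.fst) + #(F.image Prod.snd) ≤ #F) :
    ∃ d, d ≠ 0 ∧ IsCirculationOn F d := by
  obtain ⟨p₀, hp₀⟩ := hF
  set R := F.image Prod.fst
  set K := (F.image Prod.snd).erase p₀.2
  let extend : (F → ℝ) →ₗ[ℝ] ι → κ → ℝ :=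
    { toFun := fun z i j => if h : (i, j) ∈ F then z ⟨(i, j), h⟩ else 0
      map_add' := fun z z' => by ext i j; by_cases h : (i, j) ∈ F <;> simp [h]
      map_smul' := fun c z => by ext i j; by_cases h : (i, j) ∈ F <;> simp [h] }
  let L : (F → ℝ) →ₗ[ℝ] (R → ℝ) × (K → ℝ) :=
    { toFun := fun z => (fun i => ∑ j, extend z i j, fun j => ∑ i, extend z i j)
      map_add' := fun z z' => by ext <;> simp [sum_add_distrib]
      map_smul' := fun c z => by ext <;> simp [mul_sum] }
  have hK : #K + 1 = #(F.image Prod.snd) := card_erase_add_one (mem_image_of_mem _ hp₀)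
  -- one column sum is dropped: it is determined by the others, as both families sum to the total
  have hrank : Module.finrank ℝ ((R → ℝ) × (K → ℝ)) < Module.finrank ℝ (F → ℝ) := by
    simp only [Module.finrank_prod, Module.finrank_fintype_fun_eq_card, Fintype.card_coe]
    omega
  obtain ⟨z, hzL, hz⟩ := Submodule.exists_mem_ne_zero_of_ne_bot
    (LinearMap.ker_ne_bot_of_finrank_lt (f := L) hrank)
  rw [LinearMap.mem_ker] at hzL
  set d := extend z
  have hsupp : ∀ i j, (i, j) ∉ F → d i j = 0 := fun i j h => dif_neg h
  have hrow : ∀ i, ∑ j, d i j = 0 := by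
    intro i
    by_cases hi : i ∈ R
    · exact congrFun (congrArg Prod.fst hzL) ⟨i, hi⟩
    · exact sum_eq_zero fun j _ => hsupp i j fun h => hi (mem_image_of_mem Prod.fst h)
  have hcol_ne : ∀ j ≠ p₀.2, ∑ i, d i j = 0 := by
    intro j hj
    by_cases hjK : j ∈ K
    · exact congrFun (congrArg Prod.snd hzL) ⟨j, hjK⟩
    · refine sum_eq_zero fun i _ => hsupp i j fun h => hjK ?_
      exact mem_erase.mpr ⟨hj, mem_image_of_mem Prod.snd h⟩
  have hcol : ∀ j, ∑ i, d i j = 0 := by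
    intro j
    by_cases hj : j = p₀.2
    · have htotal : ∑ j, ∑ i, d i j = 0 := by rw [sum_comm]; exact sum_eq_zero fun i _ => hrow i
      rwa [sum_eq_single p₀.2 (fun j _ hj => hcol_ne j hj) (by simp), ← hj] at htotal
    · exact hcol_ne j hj
  refine ⟨d, fun hd => hz ?_, hsupp, hrow, hcol⟩
  ext ⟨⟨i, j⟩, h⟩
  simpa [d, extend, h] using congrFun (congrFun hd i) j

lemma exists_fractSupport_ssubset (w : ι → κ → ℝ) (l u : ι → κ → ℤ) (r : ι → ℤ) (c : κ → ℤ)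
    (x : ι → κ → ℝ) (hr : ∀ i, ∑ j, x i j = r i) (hc : ∀ j, ∑ i, x i j = c j)
    (hbox : ∀ i j, (l i j : ℝ) ≤ x i j ∧ x i j ≤ u i j)
    (hF : (fractSupport (Function.uncurry x)).Nonempty) :
    ∃ x' : ι → κ → ℝ, (∀ i, ∑ j, x' i j = r i) ∧ (∀ j, ∑ i, x' i j = c j) ∧
      (∀ i j, (l i j : ℝ) ≤ x' i j ∧ x' i j ≤ u i j) ∧
      ∑ i, ∑ j, w i j * x i j ≤ ∑ i, ∑ j, w i j * x' i j ∧
      fractSupport (Function.uncurry x') ⊂ fractSupport (Function.uncurry x) := by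
  classical
  set F := fractSupport (Function.uncurry x)
  have hrowmate : ∀ p ∈ F, ∃ q ∈ F, q ≠ p ∧ q.1 = p.1 := by
    rintro ⟨i, j⟩ hp
    obtain ⟨j', -, hj', hfrac⟩ :=
      exists_ne_notMem_range_intCast_of_sum_eq_intCast (hr i) (mem_univ j)
      ((mem_fractSupport (x := Function.uncurry x)).mp hp)
    exact ⟨(i, j'), mem_fractSupport.mpr hfrac, by simpa using hj', rfl⟩
  have hcolmate : ∀ p ∈ F, ∃ q ∈ F, q ≠ p ∧ q.2 = p.2 := by
    rintro ⟨i, j⟩ hp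
    obtain ⟨i', -, hi', hfrac⟩ :=
      exists_ne_notMem_range_intCast_of_sum_eq_intCast (hc j) (mem_univ i)
      ((mem_fractSupport (x := Function.uncurry x)).mp hp)
    exact ⟨(i', j), mem_fractSupport.mpr hfrac, by simpa using hi', rfl⟩
  have hcard : #(F.image Prod.fst) + #(F.image Prod.snd) ≤ #F := by
    have := two_mul_card_image_le hrowmate
    have := two_mul_card_image_le hcolmate
    omega
  obtain ⟨d, hd0, hd⟩ := exists_ne_zero_isCirculationOn hF hcard
  obtain ⟨e, he0, ⟨hsupp, hrow, hcol⟩, hobj⟩ :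
      ∃ e, e ≠ 0 ∧ IsCirculationOn F e ∧ 0 ≤ ∑ i, ∑ j, w i j * e i j := by
    rcases le_total 0 (∑ i, ∑ j, w i j * d i j) with h | h
    · exact ⟨d, hd0, hd, h⟩
    · exact ⟨-d, neg_ne_zero.mpr hd0, hd.neg, by simpa using h⟩
  have he0' : Function.uncurry e ≠ 0 := fun h => he0 (funext₂ fun i j => congrFun h (i, j))
  obtain ⟨ε, hε, hcell, ⟨qi, qj⟩, hq, hqint⟩ := exists_pos_step_to_intCast
    (Function.uncurry x) (Function.uncurry e) he0'
    fun ⟨i, j⟩ h => mem_fractSupport.mp (not_imp_comm.mp (hsupp i j) h)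
  refine ⟨fun i j => x i j + ε * e i j, fun i => ?_, fun j => ?_, fun i j => ?_, ?_, ?_⟩
  · simp [sum_add_distrib, ← mul_sum, hrow, hr]
  · simp [sum_add_distrib, ← mul_sum, hcol, hc]
  · obtain ⟨hlo, hhi⟩ := hcell (i, j)
    exact ⟨(Int.cast_le.mpr (Int.le_floor.mpr (hbox i j).1)).trans hlo,
      hhi.trans (Int.cast_le.mpr (Int.ceil_le.mpr (hbox i j).2))⟩
  · simp only [mul_add, sum_add_distrib, mul_left_comm _ ε, ← mul_sum]
    exact le_add_of_nonneg_right (mul_nonneg hε.le hobj)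
  · refine (ssubset_iff_of_subset fun ⟨i, j⟩ hp => ?_).mpr
      ⟨(qi, qj), not_imp_comm.mp (hsupp qi qj) hq, fun h => mem_fractSupport.mp h hqint⟩
    by_contra hpF
    refine mem_fractSupport.mp hp ?_
    simpa [hsupp i j hpF] using notMem_fractSupport.mp hpF

theorem exists_int_matrix_rowSum_colSum_le (w : ι → κ → ℝ) (l u : ι → κ → ℤ) (r : ι → ℤ)
    (c : κ → ℤ) (x : ι → κ → ℝ) (hr : ∀ i, ∑ j, x i j = r i) (hc : ∀ j, ∑ i, x i j = c j)
    (hbox : ∀ i j, (l i j : ℝ) ≤ x i j ∧ x i j ≤ u i j) :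
    ∃ xb : ι → κ → ℤ, (∀ i, ∑ j, xb i j = r i) ∧ (∀ j, ∑ i, xb i j = c j) ∧
      (∀ i j, l i j ≤ xb i j ∧ xb i j ≤ u i j) ∧
      ∑ i, ∑ j, w i j * x i j ≤ ∑ i, ∑ j, w i j * (xb i j : ℝ) := by
  induction hk : #(fractSupport (Function.uncurry x)) using Nat.strong_induction_on
    generalizing x with
  | _ k ih =>
  rcases (fractSupport (Function.uncurry x)).eq_empty_or_nonempty with hF | hF
  · have hint : ∀ i j, (⌊x i j⌋ : ℝ) = x i j := fun i j =>
      (Int.floor_eq_self_iff_mem _).mpr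
        ((notMem_fractSupport (x := Function.uncurry x) (p := (i, j))).mp (by simp [hF]))
    refine ⟨fun i j => ⌊x i j⌋, fun i => ?_, fun j => ?_, fun i j => ?_, by simp [hint]⟩
    · exact_mod_cast (show ((∑ j, ⌊x i j⌋ : ℤ) : ℝ) = r i by push_cast [hint]; exact hr i)
    · exact_mod_cast (show ((∑ i, ⌊x i j⌋ : ℤ) : ℝ) = c j by push_cast [hint]; exact hc j)
    · exact ⟨Int.le_floor.mpr (hbox i j).1, Int.floor_le_iff.mpr (by linarith [(hbox i j).2])⟩
  · obtain ⟨x', hr', hc', hbox', hobj, hss⟩ := exists_fractSupport_ssubset w l u r c x hr hc hbox hF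
    obtain ⟨xb, hrb, hcb, hboxb, hobjb⟩ := ih _ (hk ▸ card_lt_card hss) x' hr' hc' hbox' rfl
    exact ⟨xb, hrb, hcb, hboxb, hobj.trans hobjb⟩

lemma exists_int_matrix_const_add_rowSum_colSum_le (β : ℤ) (b : ι → ℤ) (c : κ → ℤ)
    (l u : ι → κ → ℤ) (w : ι → κ → ℝ) (x : ι → κ → ℝ)
    (hc : ∀ j, ∑ i, x i j = (c j : ℝ)) (hr : ∀ i, (β : ℝ) + ∑ j, x i j = (b i : ℝ))
    (hbox : ∀ i j, (l i j : ℝ) ≤ x i j ∧ x i j ≤ (u i j : ℝ)) :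
    ∃ xb : ι → κ → ℤ, (∀ j, ∑ i, xb i j = c j) ∧ (∀ i, β + ∑ j, xb i j = b i) ∧
      (∀ i j, l i j ≤ xb i j ∧ xb i j ≤ u i j) ∧
      ∑ i, ∑ j, w i j * x i j ≤ ∑ i, ∑ j, w i j * (xb i j : ℝ) := by
  obtain ⟨xb, hrb, hcb, hboxb, hobj⟩ := exists_int_matrix_rowSum_colSum_le w l u
    (fun i => b i - β) c x (fun i => by push_cast; linarith [hr i]) hc hbox
  exact ⟨xb, hcb, fun i => by rw [hrb i]; ring, hboxb, hobj⟩

end Matrix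

theorem fourblock_ones_mip_rounding_and_sup_general
    (sC tB tA n : ℕ)
    (C : Matrix (Fin sC) (Fin tB) ℤ) (D : Matrix (Fin sC) (Fin tA) ℤ)
    (B : Fin tB → ℤ)
    (b0 : Fin sC → ℤ) (b : Fin n → ℤ)
    (l0 u0 : Fin tB → ℤ) (l u : Fin n → Fin tA → ℤ)
    (w0 : Fin tB → ℝ) (w : Fin n → Fin tA → ℝ)
    (x0 : Fin tB → ℤ) (y : Fin tA → ℤ) (x : Fin n → Fin tA → ℝ)
    (hsum : ∀ j, ∑ i, x i j = (y j : ℝ))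
    (hCD : C.mulVec x0 + D.mulVec y = b0)
    (hB : ∀ i, ((∑ j, B j * x0 j : ℤ) : ℝ) + ∑ j, x i j = (b i : ℝ))
    (hbox : ∀ i j, (l i j : ℝ) ≤ x i j ∧ x i j ≤ (u i j : ℝ)) :
    (∃ xbar : Fin n → Fin tA → ℤ,
      (∀ j, ∑ i, xbar i j = y j) ∧
      (C.mulVec x0 + D.mulVec (fun j => ∑ i, xbar i j) = b0) ∧
      (∀ i, (∑ j, B j * x0 j) + ∑ j, xbar i j = b i) ∧
      (∀ i j, l i j ≤ xbar i j ∧ xbar i j ≤ u i j) ∧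
      (∑ j, w0 j * (x0 j : ℝ)) + ∑ i, ∑ j, w i j * (xbar i j : ℝ) ≥
        (∑ j, w0 j * (x0 j : ℝ)) + ∑ i, ∑ j, w i j * x i j) ∧
    sSup {r : ℝ | ∃ (z0 : Fin tB → ℤ) (z : Fin n → Fin tA → ℤ),
        (C.mulVec z0 + D.mulVec (fun j => ∑ i, z i j) = b0) ∧
        (∀ i, (∑ j, B j * z0 j) + ∑ j, z i j = b i) ∧
        (∀ j, l0 j ≤ z0 j ∧ z0 j ≤ u0 j) ∧
        (∀ i j, l i j ≤ z i j ∧ z i j ≤ u i j) ∧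
        r = (∑ j, w0 j * (z0 j : ℝ)) + ∑ i, ∑ j, w i j * (z i j : ℝ)} =
    sSup {r : ℝ | ∃ (z0 : Fin tB → ℤ) (yy : Fin tA → ℤ) (z : Fin n → Fin tA → ℝ),
        (∀ j, ∑ i, z i j = (yy j : ℝ)) ∧
        (C.mulVec z0 + D.mulVec yy = b0) ∧
        (∀ i, ((∑ j, B j * z0 j : ℤ) : ℝ) + ∑ j, z i j = (b i : ℝ)) ∧
        (∀ j, l0 j ≤ z0 j ∧ z0 j ≤ u0 j) ∧
        (∀ i j, (l i j : ℝ) ≤ z i j ∧ z i j ≤ (u i j : ℝ)) ∧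
        r = (∑ j, w0 j * (z0 j : ℝ)) + ∑ i, ∑ j, w i j * z i j} := by
  obtain ⟨xbar, hcol, hrow, hboxb, hobj⟩ :=
    exists_int_matrix_const_add_rowSum_colSum_le _ b y l u w x hsum hB hbox
  refine ⟨⟨xbar, hcol, by rwa [funext hcol], hrow, hboxb, add_le_add_right hobj _⟩, ?_⟩
  apply csSup_eq_csSup_of_forall_exists_le
  · rintro _ ⟨z0, z, hCD', hB', hbox0', hbox', rfl⟩
    refine ⟨_, ⟨z0, fun j => ∑ i, z i j, fun i j => z i j, fun j => by push_cast; rfl, hCD',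
      fun i => by push_cast; exact_mod_cast hB' i, hbox0', fun i j => ?_, rfl⟩, le_rfl⟩
    exact ⟨Int.cast_le.mpr (hbox' i j).1, Int.cast_le.mpr (hbox' i j).2⟩
  · rintro _ ⟨z0, yy, z, hsum', hCD', hB', hbox0', hbox', rfl⟩
    obtain ⟨zb, hcol', hrow', hboxb', hobj'⟩ :=
      exists_int_matrix_const_add_rowSum_colSum_le _ b yy l u w z hsum' hB' hbox'
    exact ⟨_, ⟨z0, zb, by rwa [funext hcol'], hrow', hbox0', hboxb', rfl⟩,
      add_le_add_right hobj' _⟩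

/-- For 4-block n-fold IP with `A = (1,…,1)`: any feasible solution of the
mixed relaxation MIP₂ (integral `x⁰`, `y`, real bricks `x¹,…,xⁿ`) can be
rounded to an integral solution with the same `x⁰`, `y` and no smaller
objective; consequently the suprema of the objective over integer feasible
solutions and over mixed feasible solutions coincide. -/
theorem fourblock_ones_mip_rounding_and_sup
    (sC tB tA n : ℕ) (hsC : 1 ≤ sC) (htB : 1 ≤ tB) (htA : 1 ≤ tA) (hn : 1 ≤ n)
    (C : Matrix (Fin sC) (Fin tB) ℤ) (D : Matrix (Fin sC) (Fin tA) ℤ)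
    (B : Fin tB → ℤ)
    (b0 : Fin sC → ℤ) (b : Fin n → ℤ)
    (l0 u0 : Fin tB → ℤ) (l u : Fin n → Fin tA → ℤ)
    (w0 : Fin tB → ℝ) (w : Fin n → Fin tA → ℝ)
    (x0 : Fin tB → ℤ) (y : Fin tA → ℤ) (x : Fin n → Fin tA → ℝ)
    (hsum : ∀ j, ∑ i, x i j = (y j : ℝ))
    (hCD : C.mulVec x0 + D.mulVec y = b0)
    (hB : ∀ i, ((∑ j, B j * x0 j : ℤ) : ℝ) + ∑ j, x i j = (b i : ℝ))
    (hbox0 : ∀ j, l0 j ≤ x0 j ∧ x0 j ≤ u0 j)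
    (hbox : ∀ i j, (l i j : ℝ) ≤ x i j ∧ x i j ≤ (u i j : ℝ)) :
    (∃ xbar : Fin n → Fin tA → ℤ,
      (∀ j, ∑ i, xbar i j = y j) ∧
      (C.mulVec x0 + D.mulVec (fun j => ∑ i, xbar i j) = b0) ∧
      (∀ i, (∑ j, B j * x0 j) + ∑ j, xbar i j = b i) ∧
      (∀ i j, l i j ≤ xbar i j ∧ xbar i j ≤ u i j) ∧
      (∑ j, w0 j * (x0 j : ℝ)) + ∑ i, ∑ j, w i j * (xbar i j : ℝ) ≥
        (∑ j, w0 j * (x0 j : ℝ)) + ∑ i, ∑ j, w i j * x i j) ∧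
    sSup {r : ℝ | ∃ (z0 : Fin tB → ℤ) (z : Fin n → Fin tA → ℤ),
        (C.mulVec z0 + D.mulVec (fun j => ∑ i, z i j) = b0) ∧
        (∀ i, (∑ j, B j * z0 j) + ∑ j, z i j = b i) ∧
        (∀ j, l0 j ≤ z0 j ∧ z0 j ≤ u0 j) ∧
        (∀ i j, l i j ≤ z i j ∧ z i j ≤ u i j) ∧
        r = (∑ j, w0 j * (z0 j : ℝ)) + ∑ i, ∑ j, w i j * (z i j : ℝ)} =
    sSup {r : ℝ | ∃ (z0 : Fin tB → ℤ) (yy : Fin tA → ℤ) (z : Fin n → Fin tA → ℝ),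
        (∀ j, ∑ i, z i j = (yy j : ℝ)) ∧
        (C.mulVec z0 + D.mulVec yy = b0) ∧
        (∀ i, ((∑ j, B j * z0 j : ℤ) : ℝ) + ∑ j, z i j = (b i : ℝ)) ∧
        (∀ j, l0 j ≤ z0 j ∧ z0 j ≤ u0 j) ∧
        (∀ i j, (l i j : ℝ) ≤ z i j ∧ z i j ≤ (u i j : ℝ)) ∧
        r = (∑ j, w0 j * (z0 j : ℝ)) + ∑ i, ∑ j, w i j * z i j} :=
  fourblock_ones_mip_rounding_and_sup_general sC tB tA n C D B b0 b l0 u0 l u w0 w x0 y x hsum hCD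
    hB hbox
end

section
/- Let θ ≥ 1 be an integer, let n ≥ 1, and let a₁, …, aₙ, b₁, …, bₙ be integers. Consider the map F defined on {0, 1, …, θ − 1} by F(ξ) = ((⌈(aᵢ − ξ)/θ⌉)_{i=1}^n, (⌊(bᵢ − ξ)/θ⌋)_{i=1}^n). Then F takes at most 2n + 1 distinct values, and {0, 1, …, θ − 1} can be partitioned into at most 2n + 1 integer intervals on each of which F is constant. -/
/-!
For `0 ≤ ξ < θ` one has `⌈(a − ξ)/θ⌉ = a / θ + [ξ < a % θ]` and `⌊(b − ξ)/θ⌋ = b / θ − [b % θ < ξ]`,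
so `F ξ` only depends on which of the at most `2n` breakpoints `aᵢ % θ`, `bᵢ % θ + 1` are `≤ ξ`.
The number of breakpoints `≤ ξ` is monotone in `ξ` and takes at most `2n + 1` values, and its
level sets are integer intervals on which `F` is constant.
-/

open Finset

lemma Rat.floor_intCast_div_intCast (x : ℤ) {θ : ℤ} (hθ : 0 ≤ θ) : ⌊(x : ℚ) / θ⌋ = x / θ := by
  lift θ to ℕ using hθ
  exact_mod_cast Rat.floor_intCast_div_natCast x θ

lemma Rat.ceil_intCast_div_intCast (x : ℤ) {θ : ℤ} (hθ : 0 ≤ θ) : ⌈(x : ℚ) / θ⌉ = -(-x / θ) := by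
  lift θ to ℕ using hθ
  exact_mod_cast Rat.ceil_intCast_div_natCast x θ

lemma floor_intCast_sub_div_eq (x : ℤ) {ξ θ : ℤ} (h0 : 0 ≤ ξ) (hξ : ξ < θ) :
    ⌊((x - ξ : ℤ) : ℚ) / θ⌋ = x / θ - if x % θ + 1 ≤ ξ then 1 else 0 := by
  rw [Rat.floor_intCast_div_intCast _ (by omega)]
  have hθ : 0 < θ := by omega
  have := Int.emod_add_mul_ediv x θ
  have := Int.emod_nonneg x hθ.ne'
  have := Int.emod_lt_of_pos x hθ
  split_ifs
  · exact ((Int.ediv_emod_unique (r := x % θ - ξ + θ) hθ).2 ⟨by linarith, by omega, by omega⟩).1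
  · exact ((Int.ediv_emod_unique (r := x % θ - ξ) hθ).2 ⟨by linarith, by omega, by omega⟩).1

lemma ceil_intCast_sub_div_eq (x : ℤ) {ξ θ : ℤ} (h0 : 0 ≤ ξ) (hξ : ξ < θ) :
    ⌈((x - ξ : ℤ) : ℚ) / θ⌉ = x / θ + if x % θ ≤ ξ then 0 else 1 := by
  rw [Rat.ceil_intCast_div_intCast _ (by omega), neg_eq_iff_eq_neg, neg_add]
  have hθ : 0 < θ := by omega
  have := Int.emod_add_mul_ediv x θ
  have := Int.emod_nonneg x hθ.ne'
  have := Int.emod_lt_of_pos x hθ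
  split_ifs
  · exact ((Int.ediv_emod_unique (r := ξ - x % θ) hθ).2 ⟨by linarith, by omega, by omega⟩).1
  · exact ((Int.ediv_emod_unique (r := ξ - x % θ + θ) hθ).2 ⟨by linarith, by omega, by omega⟩).1

theorem Finset.exists_eq_Icc_of_ordConnected {α : Type*} [LinearOrder α] [LocallyFiniteOrder α]
    [Nontrivial α] {s : Finset α} (hs : (s : Set α).OrdConnected) : ∃ lo hi, s = Icc lo hi := by
  obtain rfl | hne := s.eq_empty_or_nonempty
  · obtain ⟨x, y, hxy⟩ := exists_pair_lt α
    exact ⟨y, x, (Icc_eq_empty_of_lt hxy).symm⟩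
  refine ⟨s.min' hne, s.max' hne, Finset.ext fun x => ⟨fun hx => ?_, fun hx => ?_⟩⟩
  · exact mem_Icc.2 ⟨s.min'_le x hx, s.le_max' x hx⟩
  · exact_mod_cast hs.out (s.min'_mem hne) (s.max'_mem hne) (mem_Icc.1 hx)

lemma monotone_card_filter_le (B : Finset ℤ) : Monotone fun ξ : ℤ => #{c ∈ B | c ≤ ξ} :=
  fun _ _ h => card_le_card (monotone_filter_right _ fun _ _ hc => hc.trans h)

lemma le_iff_le_of_card_filter_le_eq {B : Finset ℤ} {ξ ξ' : ℤ}
    (h : #{c ∈ B | c ≤ ξ} = #{c ∈ B | c ≤ ξ'}) : ∀ c ∈ B, c ≤ ξ ↔ c ≤ ξ' := by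
  wlog hle : ξ ≤ ξ' generalizing ξ ξ'
  · exact fun c hc => (this h.symm (le_of_not_ge hle) c hc).symm
  refine filter_inj'.1 (eq_of_subset_of_card_le ?_ h.ge)
  exact monotone_filter_right _ fun _ _ hc => hc.trans hle

theorem exists_Icc_partition_of_breakpoints {β : Type*} {f : ℤ → β} {lo hi : ℤ} (B : Finset ℤ)
    (hf : ∀ ξ ∈ Icc lo hi, ∀ ξ' ∈ Icc lo hi, (∀ c ∈ B, c ≤ ξ ↔ c ≤ ξ') → f ξ = f ξ') :
    ∃ I : Fin (#B + 1) → Finset ℤ,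
      (∀ k, ∃ l h : ℤ, I k = Icc l h) ∧
      (∀ k k', k ≠ k' → Disjoint (I k) (I k')) ∧
      univ.biUnion I = Icc lo hi ∧
      (∀ k, ∀ ξ ∈ I k, ∀ ξ' ∈ I k, f ξ = f ξ') := by
  set g : ℤ → ℕ := fun ξ => #{c ∈ B | c ≤ ξ}
  refine ⟨fun k => {ξ ∈ Icc lo hi | g ξ = k}, fun k => ?_, fun k k' hkk' => ?_, ?_, ?_⟩
  · apply exists_eq_Icc_of_ordConnected
    rw [coe_filter]
    simp only [mem_Icc]
    exact Set.ordConnected_Icc.inter (Set.ordConnected_singleton.preimage_mono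
      (monotone_card_filter_le B))
  · refine disjoint_filter.2 fun ξ _ hk hk' => hkk' (Fin.ext ?_)
    exact hk.symm.trans hk'
  · ext ξ
    simp only [mem_biUnion, mem_univ, true_and, mem_filter]
    refine ⟨fun ⟨_, hξ, _⟩ => hξ, fun hξ => ⟨⟨g ξ, ?_⟩, hξ, rfl⟩⟩
    exact Nat.lt_succ_of_le (card_filter_le _ _)
  · intro k ξ hξ ξ' hξ'
    rw [mem_filter] at hξ hξ'
    exact hf ξ hξ.1 ξ' hξ'.1 (le_iff_le_of_card_filter_le_eq (hξ.2.trans hξ'.2.symm))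

lemma ncard_image_le_of_biUnion_eq {ι α β : Type*} [Fintype ι] [DecidableEq α] {s : Finset α}
    {I : ι → Finset α} {f : α → β} (hI : univ.biUnion I = s)
    (hf : ∀ k, ∀ x ∈ I k, ∀ y ∈ I k, f x = f y) : (f '' s).ncard ≤ Fintype.card ι := by
  classical
  rw [← coe_image, Set.ncard_coe_finset, ← hI, biUnion_image]
  calc #(univ.biUnion fun k => (I k).image f) ≤ ∑ k, #((I k).image f) := card_biUnion_le
    _ ≤ ∑ _k : ι, 1 := sum_le_sum fun k _ => card_le_one.2 fun _ hfx _ hfy => by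
        obtain ⟨x, hx, rfl⟩ := mem_image.1 hfx
        obtain ⟨y, hy, rfl⟩ := mem_image.1 hfy
        exact hf k x hx y hy
    _ = Fintype.card ι := by simp

def breakpoints {n : ℕ} (θ : ℤ) (a b : Fin n → ℤ) : Finset ℤ :=
  univ.image (fun i => a i % θ) ∪ univ.image (fun i => b i % θ + 1)

lemma card_breakpoints_le {n : ℕ} (θ : ℤ) (a b : Fin n → ℤ) : #(breakpoints θ a b) ≤ 2 * n :=
  calc #(breakpoints θ a b)
      ≤ #(univ.image fun i => a i % θ) + #(univ.image fun i => b i % θ + 1) := card_union_le _ _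
    _ ≤ #(univ : Finset (Fin n)) + #(univ : Finset (Fin n)) :=
        add_le_add card_image_le card_image_le
    _ = 2 * n := by simp [two_mul]

theorem efficient_subintervals_count_general
    (θ : ℤ) (n : ℕ)
    (a b : Fin n → ℤ)
    (F : ℤ → (Fin n → ℤ) × (Fin n → ℤ))
    (hF : ∀ ξ, F ξ =
      (fun i => ⌈((a i - ξ : ℤ) : ℚ) / ((θ : ℤ) : ℚ)⌉,
       fun i => ⌊((b i - ξ : ℤ) : ℚ) / ((θ : ℤ) : ℚ)⌋)) :
    (F '' (Set.Icc 0 (θ - 1))).ncard ≤ 2 * n + 1 ∧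
    ∃ m : ℕ, m ≤ 2 * n + 1 ∧
      ∃ I : Fin m → Finset ℤ,
        (∀ k, ∃ lo hi : ℤ, I k = Finset.Icc lo hi) ∧
        (∀ k k', k ≠ k' → Disjoint (I k) (I k')) ∧
        (Finset.univ.biUnion I = Finset.Icc 0 (θ - 1)) ∧
        (∀ k, ∀ ξ ∈ I k, ∀ ξ' ∈ I k, F ξ = F ξ') := by
  have hconst : ∀ ξ ∈ Icc 0 (θ - 1), ∀ ξ' ∈ Icc 0 (θ - 1),
      (∀ c ∈ breakpoints θ a b, c ≤ ξ ↔ c ≤ ξ') → F ξ = F ξ' := by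
    intro ξ hξ ξ' hξ' hB
    rw [mem_Icc] at hξ hξ'
    rw [hF, hF, Prod.mk.injEq]
    constructor <;> funext i
    · have := hB _ (mem_union_left _ (mem_image_of_mem _ (mem_univ i)))
      rw [ceil_intCast_sub_div_eq _ hξ.1 (by omega), ceil_intCast_sub_div_eq _ hξ'.1 (by omega)]
      simp only [this]
    · have := hB _ (mem_union_right _ (mem_image_of_mem _ (mem_univ i)))
      rw [floor_intCast_sub_div_eq _ hξ.1 (by omega), floor_intCast_sub_div_eq _ hξ'.1 (by omega)]
      simp only [this]
  have hm := card_breakpoints_le θ a b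
  obtain ⟨I, hIcc, hdisj, hunion, hI⟩ := exists_Icc_partition_of_breakpoints _ hconst
  have hcard := ncard_image_le_of_biUnion_eq hunion hI
  rw [coe_Icc, Fintype.card_fin] at hcard
  exact ⟨by omega, _, by omega, I, hIcc, hdisj, hunion, hI⟩

/-- The collection of all rounded bounds `(⌈(aᵢ − ξ)/θ⌉)ᵢ, (⌊(bᵢ − ξ)/θ⌋)ᵢ`
takes at most `2n + 1` distinct values as `ξ` ranges over `{0, …, θ − 1}`,
and this range can be partitioned into at most `2n + 1` integer intervals on
each of which all these bounds are constant. -/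
theorem efficient_subintervals_count
    (θ : ℤ) (hθ : 1 ≤ θ) (n : ℕ) (hn : 1 ≤ n)
    (a b : Fin n → ℤ)
    (F : ℤ → (Fin n → ℤ) × (Fin n → ℤ))
    (hF : ∀ ξ, F ξ =
      (fun i => ⌈((a i - ξ : ℤ) : ℚ) / ((θ : ℤ) : ℚ)⌉,
       fun i => ⌊((b i - ξ : ℤ) : ℚ) / ((θ : ℤ) : ℚ)⌋)) :
    (F '' (Set.Icc 0 (θ - 1))).ncard ≤ 2 * n + 1 ∧
    ∃ m : ℕ, m ≤ 2 * n + 1 ∧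
      ∃ I : Fin m → Finset ℤ,
        (∀ k, ∃ lo hi : ℤ, I k = Finset.Icc lo hi) ∧
        (∀ k k', k ≠ k' → Disjoint (I k) (I k')) ∧
        (Finset.univ.biUnion I = Finset.Icc 0 (θ - 1)) ∧
        (∀ k, ∀ ξ ∈ I k, ∀ ξ' ∈ I k, F ξ = F ξ') :=
  efficient_subintervals_count_general θ n a b F hF
end

section
/- Let n ≥ 1, 0 ≤ k ≤ n − 1, let Δ ≥ 1 be an integer, and let β₁, …, βₙ be integers with 0 ≤ βᵢ ≤ Δ. Then there exist nonnegative integers xⁱⱼ (for 1 ≤ i ≤ n, j ∈ {1,2,3}) satisfying xⁱ₁ ≤ βᵢ, xⁱ₂ ≤ Δ − βᵢ, xⁱ₃ ≤ 1, the load constraints 1·xⁱ₁ + 1·xⁱ₂ + Δ·xⁱ₃ ≤ Δ for every i, and the demand constraints ∑_{i=1}^n xⁱ₁ = Δ, ∑_{i=1}^n xⁱ₂ = (n − k − 1)·Δ, ∑_{i=1}^n xⁱ₃ = k, if and only if there exists a subset S ⊆ {1, …, n} with |S| = k and ∑_{i∉S} βᵢ = Δ. -/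
/-!
A machine that receives a type-3 job is full, so it takes no other job; since the type-3 jobs
are at most one per machine, exactly `k` machines `S` receive one. The remaining `n - k`
machines have total capacity `(n - k) Δ` and must absorb all `Δ + (n - k - 1) Δ` unit jobs, so
each of them is filled to exactly `Δ`, which forces it to take exactly `βᵢ` type-1 jobs.
Conversely, given `S`, fill every machine outside `S` with `βᵢ` type-1 and `Δ - βᵢ` type-2 jobs.
-/

open Finset

lemma machine_load_cases {Δ a b c : ℤ} (ha : 0 ≤ a) (hb : 0 ≤ b) (hc₀ : 0 ≤ c) (hc₁ : c ≤ 1)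
    (hload : a + b + Δ * c ≤ Δ) : (c = 1 ∧ a = 0 ∧ b = 0) ∨ (c = 0 ∧ a + b ≤ Δ) := by
  interval_cases c <;> simp only [mul_zero, mul_one] at hload <;> omega

section

variable {ι : Type*} [Fintype ι] [DecidableEq ι] {k : ℕ} {Δ : ℤ} {β x₁ x₂ x₃ : ι → ℤ}

theorem exists_card_eq_sum_compl_eq_of_schedule (hx₁ : ∀ i, 0 ≤ x₁ i) (hx₂ : ∀ i, 0 ≤ x₂ i)
    (hx₃ : ∀ i, 0 ≤ x₃ i) (hx₁β : ∀ i, x₁ i ≤ β i) (hx₂β : ∀ i, x₂ i ≤ Δ - β i)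
    (hx₃_le : ∀ i, x₃ i ≤ 1) (hload : ∀ i, x₁ i + x₂ i + Δ * x₃ i ≤ Δ)
    (hsum₁ : ∑ i, x₁ i = Δ) (hsum₂ : ∑ i, x₂ i = ((Fintype.card ι : ℤ) - k - 1) * Δ)
    (hsum₃ : ∑ i, x₃ i = k) :
    ∃ S : Finset ι, #S = k ∧ ∑ i ∈ Sᶜ, β i = Δ := by
  set S : Finset ι := {i | x₃ i = 1}
  have hcases i := machine_load_cases (hx₁ i) (hx₂ i) (hx₃ i) (hx₃_le i) (hload i)
  have hS : ∀ i ∈ S, x₁ i = 0 ∧ x₂ i = 0 := fun i hi ↦ by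
    have := hcases i; simp_all [S]
  have hSc : ∀ i ∈ Sᶜ, x₁ i + x₂ i ≤ Δ := fun i hi ↦ by
    have := hcases i; simp_all [S]
  have hcard : #S = k := by
    have hx₃_ite : ∀ i, x₃ i = if x₃ i = 1 then 1 else 0 := fun i ↦ by
      rcases hcases i with h | h <;> simp [h.1]
    rw [sum_congr rfl fun i _ ↦ hx₃_ite i, sum_boole] at hsum₃
    exact_mod_cast hsum₃
  have hsum_compl (f : ι → ℤ) (hf : ∀ i ∈ S, f i = 0) : ∑ i ∈ Sᶜ, f i = ∑ i, f i :=
    sum_subset (subset_univ _) fun i _ hi ↦ hf i (by simpa using hi)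
  have hfull : ∀ i ∈ Sᶜ, x₁ i + x₂ i = Δ := by
    refine (sum_eq_sum_iff_of_le hSc).1 ?_
    rw [sum_add_distrib, hsum_compl x₁ fun i hi ↦ (hS i hi).1,
      hsum_compl x₂ fun i hi ↦ (hS i hi).2, hsum₁, hsum₂, sum_const, card_compl, hcard,
      nsmul_eq_mul, Nat.cast_sub (hcard ▸ card_le_univ S)]
    ring
  refine ⟨S, hcard, ?_⟩
  calc ∑ i ∈ Sᶜ, β i = ∑ i ∈ Sᶜ, x₁ i :=
        sum_congr rfl fun i hi ↦ by linarith [hfull i hi, hx₁β i, hx₂β i]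
    _ = Δ := by rw [hsum_compl x₁ fun i hi ↦ (hS i hi).1, hsum₁]

theorem exists_schedule_of_sum_compl_eq (hβ : ∀ i, 0 ≤ β i ∧ β i ≤ Δ) (S : Finset ι)
    (hS : ∑ i ∈ Sᶜ, β i = Δ) :
    ∃ x₁ x₂ x₃ : ι → ℤ,
      (∀ i, 0 ≤ x₁ i ∧ 0 ≤ x₂ i ∧ 0 ≤ x₃ i) ∧ (∀ i, x₁ i ≤ β i) ∧ (∀ i, x₂ i ≤ Δ - β i) ∧
      (∀ i, x₃ i ≤ 1) ∧ (∀ i, x₁ i + x₂ i + Δ * x₃ i ≤ Δ) ∧ ∑ i, x₁ i = Δ ∧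
      ∑ i, x₂ i = ((Fintype.card ι : ℤ) - #S - 1) * Δ ∧ ∑ i, x₃ i = #S := by
  refine ⟨fun i ↦ if i ∈ Sᶜ then β i else 0, fun i ↦ if i ∈ Sᶜ then Δ - β i else 0,
    fun i ↦ if i ∈ S then 1 else 0, fun i ↦ ?_, fun i ↦ ?_, fun i ↦ ?_, fun i ↦ ?_, fun i ↦ ?_,
    ?_, ?_, ?_⟩
  iterate 5 by_cases hi : i ∈ S <;> simp [hi, hβ i]
  · rw [Fintype.sum_ite_mem, hS]
  · rw [Fintype.sum_ite_mem, sum_sub_distrib, hS, sum_const, card_compl, nsmul_eq_mul,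
      Nat.cast_sub (card_le_univ S)]
    ring
  · simp

end

theorem scheduling_reduction_correctness_general
    (n k : ℕ)
    (Δ : ℤ)
    (β : Fin n → ℤ) (hβ : ∀ i, 0 ≤ β i ∧ β i ≤ Δ) :
    (∃ x1 x2 x3 : Fin n → ℤ,
      (∀ i, 0 ≤ x1 i ∧ 0 ≤ x2 i ∧ 0 ≤ x3 i) ∧
      (∀ i, x1 i ≤ β i) ∧
      (∀ i, x2 i ≤ Δ - β i) ∧
      (∀ i, x3 i ≤ 1) ∧
      (∀ i, 1 * x1 i + 1 * x2 i + Δ * x3 i ≤ Δ) ∧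
      (∑ i, x1 i = Δ) ∧
      (∑ i, x2 i = ((n : ℤ) - (k : ℤ) - 1) * Δ) ∧
      (∑ i, x3 i = (k : ℤ))) ↔
    ∃ S : Finset (Fin n), S.card = k ∧ ∑ i ∈ Sᶜ, β i = Δ := by
  constructor
  · rintro ⟨x₁, x₂, x₃, hx, hx₁β, hx₂β, hx₃_le, hload, hsum₁, hsum₂, hsum₃⟩
    exact exists_card_eq_sum_compl_eq_of_schedule (fun i ↦ (hx i).1) (fun i ↦ (hx i).2.1)
      (fun i ↦ (hx i).2.2) hx₁β hx₂β hx₃_le (fun i ↦ by simpa only [one_mul] using hload i)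
      hsum₁ (by simpa using hsum₂) hsum₃
  · rintro ⟨S, rfl, hS⟩
    obtain ⟨x₁, x₂, x₃, hx, hx₁β, hx₂β, hx₃_le, hload, hsum₁, hsum₂, hsum₃⟩ :=
      exists_schedule_of_sum_compl_eq hβ S hS
    exact ⟨x₁, x₂, x₃, hx, hx₁β, hx₂β, hx₃_le, fun i ↦ by simpa only [one_mul] using hload i,
      hsum₁, by simpa using hsum₂, hsum₃⟩

/-- Correctness of the scheduling interpretation of the hardness reduction:
all jobs can be scheduled with makespan at most `Δ` iff there is a set `S` of
`k` machines receiving the type-3 jobs such that the capacities `βᵢ` of the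
remaining machines for type-1 jobs sum to exactly `Δ`. -/
theorem scheduling_reduction_correctness
    (n k : ℕ) (hn : 1 ≤ n) (hk : k ≤ n - 1)
    (Δ : ℤ) (hΔ : 1 ≤ Δ)
    (β : Fin n → ℤ) (hβ : ∀ i, 0 ≤ β i ∧ β i ≤ Δ) :
    (∃ x1 x2 x3 : Fin n → ℤ,
      (∀ i, 0 ≤ x1 i ∧ 0 ≤ x2 i ∧ 0 ≤ x3 i) ∧
      (∀ i, x1 i ≤ β i) ∧
      (∀ i, x2 i ≤ Δ - β i) ∧
      (∀ i, x3 i ≤ 1) ∧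
      (∀ i, 1 * x1 i + 1 * x2 i + Δ * x3 i ≤ Δ) ∧
      (∑ i, x1 i = Δ) ∧
      (∑ i, x2 i = ((n : ℤ) - (k : ℤ) - 1) * Δ) ∧
      (∑ i, x3 i = (k : ℤ))) ↔
    ∃ S : Finset (Fin n), S.card = k ∧ ∑ i ∈ Sᶜ, β i = Δ :=
  scheduling_reduction_correctness_general n k Δ β hβ
end
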